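/- Let B₁, B₂, D₁, D₂, R₁, R₂, Q₁, Q₂, Φ₁, Φ₂ be positive real numbers satisfying the ratio conditions Q₂/Q₁ = Φ₂/Φ₁ (call this common value λ) and (B₂²/R₂)/(B₁²/R₁) = (B₂D₂/R₂)/(B₁D₁/R₁) = (D₂B₂/R₂)/(D₁B₁/R₁) = (D₂²/R₂)/(D₁²/R₁) (call this common value μ). Define the 2×2 matrices ℬ₁ = [[B₁²/R₁, B₂²/R₂], [−B₂²/R₂, 0]], ℬ₂ = [[B₁D₁/R₁, B₂D₂/R₂], [−D₂B₂/R₂, 0]], 𝒟₁ = [[D₁B₁/R₁, D₂B₂/R₂], [−B₂D₂/R₂, 0]], 𝒟₂ = [[D₁²/R₁, D₂²/R₂], [−D₂²/R₂, 0]], 𝒬 = [[Q₁, −Q₂], [Q₂, 0]], 𝚽 = [[Φ₁, −Φ₂], [Φ₂, 0]], and Υ = [[1, −2μ], [2λ, 1]]. Then Υ is invertible and the six matrices ℬ₁Υ, ℬ₂Υ, 𝒟₁Υ, 𝒟₂Υ, Υ⁻¹𝒬, and Υ⁻¹𝚽 are all symmetric and positive definite. -/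

import Mathlib

/-!
With `μ` and `λ` the given ratios, each of `ℬ₁, ℬ₂, 𝒟₁, 𝒟₂` has the form `a • [[1, μ], [-μ, 0]]`
and each of `𝒬, 𝚽` the form `p • [[1, -λ], [λ, 0]]`, with `a, p > 0`. Multiplying out,
`ℬΥ = a • [[1 + 2λμ, -μ], [-μ, 2μ²]]` and `(det Υ) • Υ⁻¹𝒬 = p • [[1 + 2λμ, -λ], [-λ, 2λ²]]`,
where `det Υ = 1 + 4λμ > 0`. These are symmetric with positive `(0, 0)` entry and determinant
`(μa)²(1 + 4λμ) > 0`, resp. `(λp)²(1 + 4λμ) > 0`, hence positive definite.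
-/

open Matrix

theorem Matrix.PosDef.isSymm {n R : Type*} [Ring R] [PartialOrder R] [StarRing R] [TrivialStar R]
    {M : Matrix n n R} (hM : M.PosDef) : M.IsSymm :=
  isHermitian_iff_isSymm.mp hM.isHermitian

theorem posDef_fin_two_of {a b c : ℝ} (ha : 0 < a) (hdet : 0 < a * c - b ^ 2) :
    (!![a, b; b, c] : Matrix (Fin 2) (Fin 2) ℝ).PosDef := by
  refine posDef_iff_dotProduct_mulVec.mpr ⟨?_, fun x hx => ?_⟩
  · ext i j
    fin_cases i <;> fin_cases j <;> rfl
  simp only [star_trivial, dotProduct, mulVec, Fin.sum_univ_two, of_apply, cons_val',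
    cons_val_zero, cons_val_one, empty_val', cons_val_fin_one]
  have complete_square : a * (x 0 * (a * x 0 + b * x 1) + x 1 * (b * x 0 + c * x 1))
      = (a * x 0 + b * x 1) ^ 2 + (a * c - b ^ 2) * x 1 ^ 2 := by ring
  refine pos_of_mul_pos_right (complete_square ▸ ?_) ha.le
  by_cases h1 : x 1 = 0
  · have h0 : x 0 ≠ 0 := fun h0 => hx (funext fun i => by fin_cases i <;> assumption)
    rw [h1]
    simpa using (by positivity : 0 < (a * x 0) ^ 2)
  · positivity

theorem of_fin_two_eq_iff {α : Type*} {a b c d a' b' c' d' : α} :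
    !![a, b; c, d] = !![a', b'; c', d'] ↔ a = a' ∧ b = b' ∧ c = c' ∧ d = d' := by
  rw [Equiv.apply_eq_iff_eq]
  simp only [vecCons_inj, and_true, and_assoc]

theorem inv_fin_two_of {K : Type*} [Field K] {a b c d : K} :
    (!![a, b; c, d] : Matrix (Fin 2) (Fin 2) K)⁻¹ = (a * d - b * c)⁻¹ • !![d, -b; -c, a] := by
  rw [inv_def, det_fin_two_of, adjugate_fin_two_of, Ring.inverse_eq_inv']

variable {lam μ : ℝ}

-- Both `ℬΥ` and `(det Υ) • Υ⁻¹𝒬` have this shape, the latter with `λ` and `μ` exchanged.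
theorem posDef_upsilon_form {a : ℝ} (ha : 0 < a) (hμ : μ ≠ 0) (hd : 0 < 1 + 4 * lam * μ) :
    (!![a * (1 + 2 * lam * μ), -(μ * a); -(μ * a), 2 * μ ^ 2 * a] :
      Matrix (Fin 2) (Fin 2) ℝ).PosDef := by
  have hμa : μ * a ≠ 0 := mul_ne_zero hμ ha.ne'
  refine posDef_fin_two_of (mul_pos ha (by linarith)) ?_
  have hdet : a * (1 + 2 * lam * μ) * (2 * μ ^ 2 * a) - (-(μ * a)) ^ 2
      = (μ * a) ^ 2 * (1 + 4 * lam * μ) := by ring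
  rw [hdet]
  positivity

theorem posDef_mul_upsilon {a b c : ℝ} (ha : 0 < a) (hμ : μ ≠ 0) (hd : 0 < 1 + 4 * lam * μ)
    (hb : b = μ * a) (hc : c = μ * a) :
    (!![a, b; -c, 0] * !![1, -2 * μ; 2 * lam, 1] : Matrix (Fin 2) (Fin 2) ℝ).PosDef := by
  subst hb hc
  convert posDef_upsilon_form ha hμ hd using 1
  rw [mul_fin_two, of_fin_two_eq_iff]
  refine ⟨?_, ?_, ?_, ?_⟩ <;> ring

theorem inv_upsilon :
    (!![1, -2 * μ; 2 * lam, 1] : Matrix (Fin 2) (Fin 2) ℝ)⁻¹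
      = (1 + 4 * lam * μ)⁻¹ • !![1, 2 * μ; -(2 * lam), 1] := by
  rw [inv_fin_two_of]
  congr 1
  · ring
  · rw [of_fin_two_eq_iff]
    exact ⟨rfl, by ring, rfl, rfl⟩

theorem posDef_inv_upsilon_mul {p q : ℝ} (hp : 0 < p) (hlam : lam ≠ 0)
    (hd : 0 < 1 + 4 * lam * μ) (hq : q = lam * p) :
    ((!![1, -2 * μ; 2 * lam, 1] : Matrix (Fin 2) (Fin 2) ℝ)⁻¹ * !![p, -q; q, 0]).PosDef := by
  subst hq
  rw [inv_upsilon, smul_mul_assoc]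
  refine PosDef.smul ?_ (inv_pos.mpr hd)
  convert posDef_upsilon_form (lam := μ) hp hlam (by rwa [mul_right_comm]) using 1
  rw [mul_fin_two, of_fin_two_eq_iff]
  refine ⟨?_, ?_, ?_, ?_⟩ <;> ring

theorem isUnit_upsilon (hd : 1 + 4 * lam * μ ≠ 0) :
    IsUnit (!![1, -2 * μ; 2 * lam, 1] : Matrix (Fin 2) (Fin 2) ℝ) := by
  rw [isUnit_iff_isUnit_det, det_fin_two_of, isUnit_iff_ne_zero]
  convert hd using 1
  ring

theorem stmt_10_general (B1 B2 D1 D2 R1 R2 Q1 Q2 Φ1 Φ2 lam μ : ℝ)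
    (hB1 : 0 < B1) (hB2 : 0 < B2) (hD1 : 0 < D1)
    (hR1 : 0 < R1) (hR2 : 0 < R2) (hQ1 : 0 < Q1) (hQ2 : 0 < Q2)
    (hΦ1 : 0 < Φ1)
    (hlam1 : Q2 / Q1 = lam) (hlam2 : Φ2 / Φ1 = lam)
    (hμ1 : (B2 ^ 2 / R2) / (B1 ^ 2 / R1) = μ)
    (hμ2 : (B2 * D2 / R2) / (B1 * D1 / R1) = μ)
    (hμ3 : (D2 * B2 / R2) / (D1 * B1 / R1) = μ)
    (hμ4 : (D2 ^ 2 / R2) / (D1 ^ 2 / R1) = μ) :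
    let Υ : Matrix (Fin 2) (Fin 2) ℝ := !![1, -2 * μ; 2 * lam, 1]
    let calB1 : Matrix (Fin 2) (Fin 2) ℝ := !![B1 ^ 2 / R1, B2 ^ 2 / R2; -(B2 ^ 2 / R2), 0]
    let calB2 : Matrix (Fin 2) (Fin 2) ℝ := !![B1 * D1 / R1, B2 * D2 / R2; -(D2 * B2 / R2), 0]
    let calD1 : Matrix (Fin 2) (Fin 2) ℝ := !![D1 * B1 / R1, D2 * B2 / R2; -(B2 * D2 / R2), 0]
    let calD2 : Matrix (Fin 2) (Fin 2) ℝ := !![D1 ^ 2 / R1, D2 ^ 2 / R2; -(D2 ^ 2 / R2), 0]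
    let calQ : Matrix (Fin 2) (Fin 2) ℝ := !![Q1, -Q2; Q2, 0]
    let calΦ : Matrix (Fin 2) (Fin 2) ℝ := !![Φ1, -Φ2; Φ2, 0]
    IsUnit Υ ∧
    (calB1 * Υ).IsSymm ∧ (calB1 * Υ).PosDef ∧
    (calB2 * Υ).IsSymm ∧ (calB2 * Υ).PosDef ∧
    (calD1 * Υ).IsSymm ∧ (calD1 * Υ).PosDef ∧
    (calD2 * Υ).IsSymm ∧ (calD2 * Υ).PosDef ∧
    (Υ⁻¹ * calQ).IsSymm ∧ (Υ⁻¹ * calQ).PosDef ∧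
    (Υ⁻¹ * calΦ).IsSymm ∧ (Υ⁻¹ * calΦ).PosDef := by
  intro Υ calB1 calB2 calD1 calD2 calQ calΦ
  have hlam : 0 < lam := hlam1 ▸ by positivity
  have hμ : 0 < μ := hμ1 ▸ by positivity
  have hd : 0 < 1 + 4 * lam * μ := by positivity
  have ratio {x y r : ℝ} (hx : 0 < x) (h : y / x = r) : y = r * x := (div_eq_iff hx.ne').mp h
  have e1 := ratio (by positivity) hμ1
  have e2 := ratio (by positivity) hμ2
  have e3 := ratio (by positivity) hμ3
  have e4 := ratio (by positivity) hμ4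
  have hB1Υ := posDef_mul_upsilon (by positivity) hμ.ne' hd e1 e1
  have hB2Υ := posDef_mul_upsilon (by positivity) hμ.ne' hd e2 (mul_comm D2 B2 ▸ e2)
  have hD1Υ := posDef_mul_upsilon (by positivity) hμ.ne' hd e3 (mul_comm D2 B2 ▸ e3)
  have hD2Υ := posDef_mul_upsilon (by positivity) hμ.ne' hd e4 e4
  have hΥQ := posDef_inv_upsilon_mul (μ := μ) hQ1 hlam.ne' hd (ratio hQ1 hlam1)
  have hΥΦ := posDef_inv_upsilon_mul (μ := μ) hΦ1 hlam.ne' hd (ratio hΦ1 hlam2)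
  exact ⟨isUnit_upsilon hd.ne', hB1Υ.isSymm, hB1Υ, hB2Υ.isSymm, hB2Υ, hD1Υ.isSymm, hD1Υ,
    hD2Υ.isSymm, hD2Υ, hΥQ.isSymm, hΥQ, hΥΦ.isSymm, hΥΦ⟩

/-- under the ratio conditions `Q₂/Q₁ = Φ₂/Φ₁ = λ` and
`(B₂²/R₂)/(B₁²/R₁) = (B₂D₂/R₂)/(B₁D₁/R₁) = (D₂B₂/R₂)/(D₁B₁/R₁) = (D₂²/R₂)/(D₁²/R₁) = μ`,
the transformation `Υ = [[1, −2μ], [2λ, 1]]` is invertible and the matrices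
`ℬ₁Υ, ℬ₂Υ, 𝒟₁Υ, 𝒟₂Υ, Υ⁻¹𝒬, Υ⁻¹𝚽` are all symmetric positive definite. -/
theorem stmt_10 (B1 B2 D1 D2 R1 R2 Q1 Q2 Φ1 Φ2 lam μ : ℝ)
    (hB1 : 0 < B1) (hB2 : 0 < B2) (hD1 : 0 < D1) (hD2 : 0 < D2)
    (hR1 : 0 < R1) (hR2 : 0 < R2) (hQ1 : 0 < Q1) (hQ2 : 0 < Q2)
    (hΦ1 : 0 < Φ1) (hΦ2 : 0 < Φ2)
    (hlam1 : Q2 / Q1 = lam) (hlam2 : Φ2 / Φ1 = lam)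
    (hμ1 : (B2 ^ 2 / R2) / (B1 ^ 2 / R1) = μ)
    (hμ2 : (B2 * D2 / R2) / (B1 * D1 / R1) = μ)
    (hμ3 : (D2 * B2 / R2) / (D1 * B1 / R1) = μ)
    (hμ4 : (D2 ^ 2 / R2) / (D1 ^ 2 / R1) = μ) :
    let Υ : Matrix (Fin 2) (Fin 2) ℝ := !![1, -2 * μ; 2 * lam, 1]
    let calB1 : Matrix (Fin 2) (Fin 2) ℝ := !![B1 ^ 2 / R1, B2 ^ 2 / R2; -(B2 ^ 2 / R2), 0]
    let calB2 : Matrix (Fin 2) (Fin 2) ℝ := !![B1 * D1 / R1, B2 * D2 / R2; -(D2 * B2 / R2), 0]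
    let calD1 : Matrix (Fin 2) (Fin 2) ℝ := !![D1 * B1 / R1, D2 * B2 / R2; -(B2 * D2 / R2), 0]
    let calD2 : Matrix (Fin 2) (Fin 2) ℝ := !![D1 ^ 2 / R1, D2 ^ 2 / R2; -(D2 ^ 2 / R2), 0]
    let calQ : Matrix (Fin 2) (Fin 2) ℝ := !![Q1, -Q2; Q2, 0]
    let calΦ : Matrix (Fin 2) (Fin 2) ℝ := !![Φ1, -Φ2; Φ2, 0]
    IsUnit Υ ∧
    (calB1 * Υ).IsSymm ∧ (calB1 * Υ).PosDef ∧
    (calB2 * Υ).IsSymm ∧ (calB2 * Υ).PosDef ∧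
    (calD1 * Υ).IsSymm ∧ (calD1 * Υ).PosDef ∧
    (calD2 * Υ).IsSymm ∧ (calD2 * Υ).PosDef ∧
    (Υ⁻¹ * calQ).IsSymm ∧ (Υ⁻¹ * calQ).PosDef ∧
    (Υ⁻¹ * calΦ).IsSymm ∧ (Υ⁻¹ * calΦ).PosDef :=
  stmt_10_general B1 B2 D1 D2 R1 R2 Q1 Q2 Φ1 Φ2 lam μ hB1 hB2 hD1 hR1 hR2 hQ1 hQ2 hΦ1 hlam1 hlam2
    hμ1 hμ2 hμ3 hμ4
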